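/- (Hopping pattern of type B1) Let m be a positive odd integer and n a positive integer divisible by m. Let I = {0, 1, …, m−1} and J = {0, 1, …, n−1}. Let e be an integer not divisible by m, c an integer coprime to m, and f₀ an arbitrary integer. Define F : I × J → I × J by F(i, j) = ((i + e) mod m, (c·i + j + f₀) mod n). Then F is a bijection of I × J satisfying: (i) for every j ∈ J, if F₂(i₁, j) = F₂(i₂, j) then i₁ = i₂; (ii) F₁(i, j) ≠ i for all (i, j) ∈ I × J; and (iii) the function Q(i, j) = (c·i² + (2f₀ − ce)·i − 2e·j) mod m is a hopping invariant, i.e. Q(F(i, j)) = Q(i, j) for all (i, j) ∈ I × J. -/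

import Mathlib

/-!
A step of the pattern sends `(i, j)` to `(i + e, c i + j + f₀)` before reduction, and the
quadratic `c i² + (2f₀ - ce) i - 2e j` is unchanged by this step as an integer polynomial
identity; reducing `i` mod `m` and `j` mod `n` does not change it mod `m` because `m ∣ n`.
Bijectivity holds because an injective self-map of the finite grid is a bijection; the
half-duplex condition reduces mod `m` (again by `m ∣ n`) and cancels the unit `c`.
-/

open Set

namespace Int

theorem ModEq.eq_of_nonneg_of_lt {m a b : ℤ} (h : a ≡ b [ZMOD m]) (ha₀ : 0 ≤ a) (ha : a < m)
    (hb₀ : 0 ≤ b) (hb : b < m) : a = b := by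
  rwa [ModEq, emod_eq_of_lt ha₀ ha, emod_eq_of_lt hb₀ hb] at h

theorem ModEq.cancel_left_of_gcd_eq_one {m a b c : ℤ} (hm : 0 < m) (hc : Int.gcd c m = 1)
    (h : c * a ≡ c * b [ZMOD m]) : a ≡ b [ZMOD m] := by
  have := h.cancel_left_div_gcd hm
  rwa [Int.gcd_comm, hc, Nat.cast_one, Int.ediv_one] at this

end Int

open Int

def grid (m n : ℤ) : Set (ℤ × ℤ) := {x | 0 ≤ x.1 ∧ x.1 < m ∧ 0 ≤ x.2 ∧ x.2 < n}

theorem finite_grid (m n : ℤ) : (grid m n).Finite :=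
  ((finite_Ico 0 m).prod (finite_Ico 0 n)).subset fun _ ⟨h₁, h₂, h₃, h₄⟩ => ⟨⟨h₁, h₂⟩, h₃, h₄⟩

theorem bijOn_skewShift_grid {m n : ℤ} (hm : 0 < m) (hn : 0 < n) (e : ℤ) (g : ℤ → ℤ) :
    BijOn (fun x : ℤ × ℤ => ((x.1 + e) % m, (g x.1 + x.2) % n)) (grid m n) (grid m n) := by
  have hmaps :
      MapsTo (fun x : ℤ × ℤ => ((x.1 + e) % m, (g x.1 + x.2) % n)) (grid m n) (grid m n) :=
    fun _ _ =>
      ⟨emod_nonneg _ hm.ne', emod_lt_of_pos _ hm, emod_nonneg _ hn.ne', emod_lt_of_pos _ hn⟩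
  refine ((finite_grid m n).injOn_iff_bijOn_of_mapsTo hmaps).1 ?_
  rintro ⟨i₁, j₁⟩ ⟨hi₁, hi₁', hj₁, hj₁'⟩ ⟨i₂, j₂⟩ ⟨hi₂, hi₂', hj₂, hj₂'⟩ h
  simp only [Prod.mk.injEq] at h
  obtain rfl : i₁ = i₂ := (ModEq.add_right_cancel' e h.1).eq_of_nonneg_of_lt hi₁ hi₁' hi₂ hi₂'
  obtain rfl : j₁ = j₂ := (ModEq.add_left_cancel' _ h.2).eq_of_nonneg_of_lt hj₁ hj₁' hj₂ hj₂'
  rfl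

theorem eq_of_mul_add_emod_eq {m n c k i₁ i₂ : ℤ} (hm : 0 < m) (hmn : m ∣ n)
    (hc : Int.gcd c m = 1) (hi₁ : 0 ≤ i₁) (hi₁' : i₁ < m) (hi₂ : 0 ≤ i₂) (hi₂' : i₂ < m)
    (h : (c * i₁ + k) % n = (c * i₂ + k) % n) : i₁ = i₂ :=
  ((ModEq.add_right_cancel' k h).of_dvd hmn |>.cancel_left_of_gcd_eq_one hm hc).eq_of_nonneg_of_lt
    hi₁ hi₁' hi₂ hi₂'

theorem add_emod_ne_self {m e i : ℤ} (he : ¬ m ∣ e) (hi : 0 ≤ i) (hi' : i < m) :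
    (i + e) % m ≠ i := by
  intro h
  have : i + e ≡ i + 0 [ZMOD m] := by rw [ModEq, h, add_zero, emod_eq_of_lt hi hi']
  exact he (modEq_zero_iff_dvd.1 (ModEq.add_left_cancel' i this))

def hoppingInvariant (m c e f₀ i j : ℤ) : ℤ :=
  (c * i ^ 2 + (2 * f₀ - c * e) * i - 2 * e * j) % m

theorem hoppingInvariant_congr {m c e f₀ i i' j j' : ℤ} (hi : i ≡ i' [ZMOD m])
    (hj : j ≡ j' [ZMOD m]) :
    hoppingInvariant m c e f₀ i j = hoppingInvariant m c e f₀ i' j' := by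
  show _ ≡ _ [ZMOD m]
  gcongr

theorem hoppingInvariant_shift (m c e f₀ i j : ℤ) :
    hoppingInvariant m c e f₀ (i + e) (c * i + j + f₀) = hoppingInvariant m c e f₀ i j := by
  unfold hoppingInvariant
  ring_nf

theorem hoppingInvariant_emod_shift {m n : ℤ} (hmn : m ∣ n) (c e f₀ i j : ℤ) :
    hoppingInvariant m c e f₀ ((i + e) % m) ((c * i + j + f₀) % n) =
      hoppingInvariant m c e f₀ i j :=
  (hoppingInvariant_congr (mod_modEq _ _) ((mod_modEq _ _).of_dvd hmn)).trans
    (hoppingInvariant_shift ..)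

theorem stmt_5_general (m n e c f₀ : ℤ) (hm : 0 < m) (hn : 0 < n) (hmn : m ∣ n)
    (he : ¬ (m ∣ e)) (hc : Int.gcd c m = 1) :
    Set.BijOn (fun x : ℤ × ℤ => ((x.1 + e) % m, (c * x.1 + x.2 + f₀) % n))
      {x : ℤ × ℤ | 0 ≤ x.1 ∧ x.1 < m ∧ 0 ≤ x.2 ∧ x.2 < n}
      {x : ℤ × ℤ | 0 ≤ x.1 ∧ x.1 < m ∧ 0 ≤ x.2 ∧ x.2 < n} ∧
    (∀ i₁ i₂ j : ℤ, 0 ≤ i₁ → i₁ < m → 0 ≤ i₂ → i₂ < m → 0 ≤ j → j < n →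
      (c * i₁ + j + f₀) % n = (c * i₂ + j + f₀) % n → i₁ = i₂) ∧
    (∀ i j : ℤ, 0 ≤ i → i < m → 0 ≤ j → j < n → (i + e) % m ≠ i) ∧
    (∀ i j : ℤ, 0 ≤ i → i < m → 0 ≤ j → j < n →
      (c * ((i + e) % m) ^ 2 + (2 * f₀ - c * e) * ((i + e) % m)
        - 2 * e * ((c * i + j + f₀) % n)) % m
      = (c * i ^ 2 + (2 * f₀ - c * e) * i - 2 * e * j) % m) := by
  refine ⟨?_, fun i₁ i₂ j hi₁ hi₁' hi₂ hi₂' _ _ h => ?_,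
    fun i _ hi hi' _ _ => add_emod_ne_self he hi hi',
    fun i j _ _ _ _ => hoppingInvariant_emod_shift hmn c e f₀ i j⟩
  · simpa only [grid, add_right_comm _ f₀] using bijOn_skewShift_grid hm hn e (c * · + f₀)
  · simp only [add_assoc] at h
    exact eq_of_mul_add_emod_eq hm hmn hc hi₁ hi₁' hi₂ hi₂' h

/-- Hopping pattern of type B1: with `m` odd positive, `m ∣ n`, `m ∤ e` and
`gcd(c,m) = 1`, the map `F(i,j) = ((i+e) mod m, (c·i + j + f₀) mod n)` is a
bijection of `I × J = {0,…,m−1} × {0,…,n−1}` satisfying the half-duplex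
condition, the frequency-hopping condition, and admitting the hopping invariant
`Q(i,j) = (c·i² + (2f₀ − ce)·i − 2e·j) mod m`. -/
theorem stmt_5 (m n e c f₀ : ℤ) (hm : 0 < m) (hmodd : Odd m) (hn : 0 < n) (hmn : m ∣ n)
    (he : ¬ (m ∣ e)) (hc : Int.gcd c m = 1) :
    Set.BijOn (fun x : ℤ × ℤ => ((x.1 + e) % m, (c * x.1 + x.2 + f₀) % n))
      {x : ℤ × ℤ | 0 ≤ x.1 ∧ x.1 < m ∧ 0 ≤ x.2 ∧ x.2 < n}
      {x : ℤ × ℤ | 0 ≤ x.1 ∧ x.1 < m ∧ 0 ≤ x.2 ∧ x.2 < n} ∧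
    (∀ i₁ i₂ j : ℤ, 0 ≤ i₁ → i₁ < m → 0 ≤ i₂ → i₂ < m → 0 ≤ j → j < n →
      (c * i₁ + j + f₀) % n = (c * i₂ + j + f₀) % n → i₁ = i₂) ∧
    (∀ i j : ℤ, 0 ≤ i → i < m → 0 ≤ j → j < n → (i + e) % m ≠ i) ∧
    (∀ i j : ℤ, 0 ≤ i → i < m → 0 ≤ j → j < n →
      (c * ((i + e) % m) ^ 2 + (2 * f₀ - c * e) * ((i + e) % m)
        - 2 * e * ((c * i + j + f₀) % n)) % m
      = (c * i ^ 2 + (2 * f₀ - c * e) * i - 2 * e * j) % m) :=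
  stmt_5_general m n e c f₀ hm hn hmn he hc
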